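/- The map A from NC(n) to NCP(2n) defined by the doubling construction (where the permutation P_{A(π)} satisfies P_{A(π)}(2i) = 2P_π(i) − 1 and P_{A(π)}(2i−1) = 2P_π^{-1}(i) for 1 ≤ i ≤ n) is a bijection from the set of non-crossing partitions of {1,...,n} onto the set of non-crossing pairings of {1,...,2n}. -/

import Mathlib

open scoped Classical

/-- A setoid (partition) of `Fin n` is non-crossing if there is no crossing
`a < b < c < d` with `a ∼ c`, `b ∼ d` but `a` and `b` in distinct blocks. -/
def IsNC {n : ℕ} (S : Setoid (Fin n)) : Prop :=
  ∀ a b c d : Fin n, a < b → b < c → c < d → S.r a c → S.r b d → S.r a b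

/-- A partition is a pairing if every block has exactly two elements. -/
def IsPairing {m : ℕ} (T : Setoid (Fin m)) : Prop :=
  ∀ x : Fin m, ∃ y : Fin m, y ≠ x ∧ T.r x y ∧ ∀ z : Fin m, T.r x z → z = x ∨ z = y

/-- The block of `i` in the partition `S`, as a finset. -/
noncomputable def blockOf {n : ℕ} (S : Setoid (Fin n)) (i : Fin n) : Finset (Fin n) :=
  Finset.univ.filter (fun j => S.r i j)

lemma blockOf_nonempty {n : ℕ} (S : Setoid (Fin n)) (i : Fin n) :
    (blockOf S i).Nonempty :=
  ⟨i, by simp [blockOf, S.iseqv.refl i]⟩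

/-- The permutation `P_S` which performs an increasing cycle on every block of `S`:
it sends `i` to the next larger element of its block, or to the minimum of the
block if `i` is the largest element of its block. -/
noncomputable def nextP {n : ℕ} (S : Setoid (Fin n)) (i : Fin n) : Fin n :=
  if h : ((blockOf S i).filter (fun j => i < j)).Nonempty
  then ((blockOf S i).filter (fun j => i < j)).min' h
  else (blockOf S i).min' (blockOf_nonempty S i)

/-- The inverse permutation `P_S⁻¹` (decreasing cycle on every block of `S`). -/
noncomputable def prevP {n : ℕ} (S : Setoid (Fin n)) (i : Fin n) : Fin n :=
  if h : ((blockOf S i).filter (fun j => j < i)).Nonempty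
  then ((blockOf S i).filter (fun j => j < i)).max' h
  else (blockOf S i).max' (blockOf_nonempty S i)

/-- `0`-indexed version of the point `2i-1` of `{1,…,2n}`. -/
def dEven {n : ℕ} (j : Fin n) : Fin (2*n) := ⟨2*j.val, by have := j.isLt; omega⟩

/-- `0`-indexed version of the point `2i` of `{1,…,2n}`. -/
def dOdd {n : ℕ} (j : Fin n) : Fin (2*n) := ⟨2*j.val+1, by have := j.isLt; omega⟩

/-- The doubling construction `π ↦ A(π)`: the pairing of `{1,…,2n}` generated by
pairing each point `2i` with `2P_π(i) - 1`, so that the associated permutation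
satisfies `P_{A(π)}(2i) = 2P_π(i) - 1` and `P_{A(π)}(2i-1) = 2P_π⁻¹(i)`. -/
noncomputable def archSetoid {n : ℕ} (S : Setoid (Fin n)) : Setoid (Fin (2*n)) :=
  Relation.EqvGen.setoid (fun a b => ∃ j : Fin n, a = dOdd j ∧ b = dEven (nextP S j))

/-- The meandric system permutation `M_{π,ρ} ∈ S_{2n}`, defined by
`M_{π,ρ}(2i-1) = 2P_π⁻¹(i)` and `M_{π,ρ}(2i) = 2P_ρ(i) - 1` (here `0`-indexed). -/
noncomputable def meanderMap {n : ℕ} (π ρ : Setoid (Fin n)) (x : Fin (2*n)) : Fin (2*n) :=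
  if x.val % 2 = 0
  then dOdd (prevP π ⟨x.val / 2, by have := x.isLt; omega⟩)
  else dEven (nextP ρ ⟨x.val / 2, by have := x.isLt; omega⟩)

/-- The orbit partition of a map. -/
def orbitSetoid {m : ℕ} (f : Fin m → Fin m) : Setoid (Fin m) :=
  Relation.EqvGen.setoid (fun a b => f a = b)

/-- Number of orbits of a map. -/
noncomputable def numOrbits {m : ℕ} (f : Fin m → Fin m) : ℕ :=
  Nat.card (Quotient (orbitSetoid f))

/-- `S` is a union of blocks of the partition `T`. -/
def IsBlockUnion {m : ℕ} (T : Setoid (Fin m)) (S : Set (Fin m)) : Prop :=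
  ∀ x ∈ S, ∀ y, T.r x y → y ∈ S

/-- `S` is invariant under `f`. -/
def MInvariant {m : ℕ} (f : Fin m → Fin m) (S : Set (Fin m)) : Prop :=
  ∀ x ∈ S, f x ∈ S

/-- The meandric system `M_{π,ρ}` is reducible: some proper subinterval
`{a,…,b}` of `{1,…,2n}` is invariant under `M_{π,ρ}`. -/
noncomputable def Reducible {n : ℕ} (π ρ : Setoid (Fin n)) : Prop :=
  ∃ a b : Fin (2*n), a ≤ b ∧ b.val - a.val < 2*n - 1 ∧
    MInvariant (meanderMap π ρ) {x | a ≤ x ∧ x ≤ b}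

/-- The join in the lattice of non-crossing partitions: the smallest
non-crossing partition above both `π` and `ρ`. -/
noncomputable def ncJoin {m : ℕ} (π ρ : Setoid (Fin m)) : Setoid (Fin m) :=
  sInf {τ | IsNC τ ∧ π ≤ τ ∧ ρ ≤ τ}

/-- The moment-cumulant formula of free probability: `mom n` is the sum over all
non-crossing partitions of `{1,…,n}` of the products of cumulants `κ` indexed
by the block sizes.  This uniquely determines the free cumulants `κ n`, `n ≥ 1`,
of a sequence of moments. -/
def MomCum {F : Type*} [Field F] (mom κ : ℕ → F) : Prop :=
  ∀ n : ℕ, 0 < n →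
    mom n = ∑ᶠ S ∈ {S : Setoid (Fin n) | IsNC S}, ∏ᶠ B ∈ Setoid.classes S, κ B.ncard

/-- The number of irreducible meandric systems on `2k` bridges, described as the
number of pairs `(π,ρ) ∈ NC(k)²` with `π ∨ ρ = 1_k`, `π ∧ ρ = 0_k`. -/
noncomputable def mirr (k : ℕ) : ℕ :=
  Nat.card {pr : Setoid (Fin k) × Setoid (Fin k) //
    IsNC pr.1 ∧ IsNC pr.2 ∧ ncJoin pr.1 pr.2 = ⊤ ∧ pr.1 ⊓ pr.2 = ⊥}

/-- The number of pairs `(π,ρ) ∈ NC(n)²` whose meandric system `M_{π,ρ}` has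
exactly `k` orbits (connected components). -/
noncomputable def mcount (n k : ℕ) : ℕ :=
  Nat.card {pr : Setoid (Fin n) × Setoid (Fin n) //
    IsNC pr.1 ∧ IsNC pr.2 ∧ numOrbits (meanderMap pr.1 pr.2) = k}

/-- The number of meanders on `2n` bridges. -/
noncomputable def meanderNum (n : ℕ) : ℕ := mcount n 1

/-!
Write `P = P_π`. The arches of `A(π)` join `2j+1` to `2P(j)` (`0`-indexed), and the points
strictly inside such an arch, read cyclically from `2j+1` to `2P(j)`, are the doubles of the
points lying cyclically strictly between `j` and `P(j)`. A partition is non-crossing iff each of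
these gaps `(j, P(j))` is a union of blocks; the inside of every arch is then a union of arches,
so `A(π)` is non-crossing. Since `π` is the orbit partition of `P` and `A(π)` determines `P`,
`A` is injective. Conversely, the points inside an arch of a non-crossing pairing are paired
among themselves, so each arch joins an odd point `2j+1` to an even point `2f(j)`; the gaps
`(j, f(j))` are then invariant under `f`, hence the orbit partition of `f` is non-crossing, has
`P = f`, and is mapped onto the given pairing.
-/

section CyclicIoo
variable {α : Type*} [LinearOrder α]

/-- The points met strictly between `a` and `b` when walking upward from `a` and wrapping around
from the top to the bottom; in particular `cyclicIoo a a` is everything except `a`. -/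
def cyclicIoo (a b : α) : Set α :=
  if a < b then Set.Ioo a b else Set.Iio b ∪ Set.Ioi a

lemma cyclicIoo_of_lt {a b : α} (h : a < b) : cyclicIoo a b = Set.Ioo a b := if_pos h

lemma mem_cyclicIoo {a b x : α} :
    x ∈ cyclicIoo a b ↔ (a < b ∧ a < x ∧ x < b) ∨ (b ≤ a ∧ (x < b ∨ a < x)) := by
  unfold cyclicIoo
  split_ifs with h <;> simp [h, not_lt.1]

lemma left_notMem_cyclicIoo (a b : α) : a ∉ cyclicIoo a b := by
  rw [mem_cyclicIoo]; grind

lemma right_notMem_cyclicIoo (a b : α) : b ∉ cyclicIoo a b := by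
  rw [mem_cyclicIoo]; grind

lemma mem_cyclicIoo_or_mem_cyclicIoo (a : α) {b c : α} (h : b ≠ c) :
    b ∈ cyclicIoo a c ∨ c ∈ cyclicIoo a b := by
  simp only [mem_cyclicIoo]; grind

lemma mem_cyclicIoo_or_mem_cyclicIoo' {a b : α} (c : α) (h : a ≠ b) :
    a ∈ cyclicIoo b c ∨ b ∈ cyclicIoo a c := by
  simp only [mem_cyclicIoo]; grind

lemma mem_cyclicIoo_iff_notMem_of_lt {a b c d : α} (hab : a < b) (hbc : b < c) (hcd : c < d) :
    (b ∈ cyclicIoo a c ↔ d ∉ cyclicIoo a c) ∧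
      (b ∈ cyclicIoo c a ↔ d ∉ cyclicIoo c a) := by
  simp only [mem_cyclicIoo]; grind

end CyclicIoo

lemma IsBlockUnion.mem_iff {m : ℕ} {T : Setoid (Fin m)} {C : Set (Fin m)} (hC : IsBlockUnion T C)
    {x y : Fin m} (hxy : T.r x y) : x ∈ C ↔ y ∈ C :=
  ⟨fun hx => hC x hx y hxy, fun hy => hC y hy x (T.iseqv.symm hxy)⟩

lemma isBlockUnion_orbitSetoid {m : ℕ} {f : Fin m → Fin m} {C : Set (Fin m)}
    (h : ∀ x, f x ∈ C ↔ x ∈ C) : IsBlockUnion (orbitSetoid f) C := by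
  have hker : orbitSetoid f ≤ Setoid.ker (· ∈ C) :=
    Setoid.eqvGen_le fun x y hxy => by rw [Setoid.ker_def, ← hxy, h x]
  exact fun x hx y hxy => (Setoid.ker_def.1 (hker hxy)) ▸ hx

section NextP
variable {n : ℕ} {S : Setoid (Fin n)}

lemma mem_blockOf {i j : Fin n} : j ∈ blockOf S i ↔ S.r i j := by
  simp [blockOf]

lemma nextP_spec (S : Setoid (Fin n)) (a : Fin n) :
    S.r a (nextP S a) ∧ ∀ w, S.r a w → w ∉ cyclicIoo a (nextP S a) := by
  unfold nextP
  split_ifs with h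
  · obtain ⟨hb, hab⟩ := Finset.mem_filter.1 (Finset.min'_mem _ h)
    refine ⟨mem_blockOf.1 hb, fun w hw hw' => ?_⟩
    rw [cyclicIoo_of_lt hab] at hw'
    have := Finset.min'_le _ w (Finset.mem_filter.2 ⟨mem_blockOf.2 hw, hw'.1⟩)
    exact (not_lt.2 this) hw'.2
  · refine ⟨mem_blockOf.1 (Finset.min'_mem _ _), fun w hw hw' => ?_⟩
    have hmin := Finset.min'_le _ w (mem_blockOf.2 hw)
    have hw_le : w ≤ a :=
      not_lt.1 fun haw => h ⟨w, Finset.mem_filter.2 ⟨mem_blockOf.2 hw, haw⟩⟩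
    rw [mem_cyclicIoo] at hw'
    grind

lemma rel_nextP (S : Setoid (Fin n)) (a : Fin n) : S.r a (nextP S a) := (nextP_spec S a).1

lemma nextP_eq_iff {a b : Fin n} :
    nextP S a = b ↔ S.r a b ∧ ∀ w, S.r a w → w ∉ cyclicIoo a b := by
  refine ⟨fun h => h ▸ nextP_spec S a, fun ⟨hab, hgap⟩ => by_contra fun hne => ?_⟩
  obtain ⟨hnext, hgap'⟩ := nextP_spec S a
  rcases mem_cyclicIoo_or_mem_cyclicIoo a hne with h | h
  · exact hgap _ hnext h
  · exact hgap' _ hab h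

lemma nextP_injective (S : Setoid (Fin n)) : Function.Injective (nextP S) := by
  intro a b h
  by_contra hne
  have hab : S.r a b := S.iseqv.trans (rel_nextP S a) (h ▸ S.iseqv.symm (rel_nextP S b))
  rcases mem_cyclicIoo_or_mem_cyclicIoo' (nextP S b) hne with h' | h'
  · exact (nextP_spec S b).2 a (S.iseqv.symm hab) h'
  · exact (nextP_spec S a).2 b hab (h ▸ h')

lemma nextP_mem_Ioc_of_rel {a c : Fin n} (hac : S.r a c) (hlt : a < c) :
    nextP S a ∈ Set.Ioc a c := by
  have hc := (nextP_spec S a).2 c hac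
  rw [mem_cyclicIoo] at hc
  rw [Set.mem_Ioc]
  grind

lemma orbitSetoid_nextP (S : Setoid (Fin n)) : orbitSetoid (nextP S) = S := by
  refine le_antisymm (Setoid.eqvGen_le fun a b h => h ▸ rel_nextP S a) ?_
  have key : ∀ i j, S.r i j → i ≤ j → (orbitSetoid (nextP S)).r i j := by
    intro i
    induction i using WellFoundedGT.induction with
    | _ i ih =>
      intro j hij hle
      rcases hle.eq_or_lt with rfl | hlt
      · exact (orbitSetoid (nextP S)).iseqv.refl i
      obtain ⟨h1, h2⟩ := nextP_mem_Ioc_of_rel hij hlt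
      have hstep : (orbitSetoid (nextP S)).r i (nextP S i) := Relation.EqvGen.rel _ _ rfl
      exact (orbitSetoid (nextP S)).iseqv.trans hstep
        (ih _ h1 j (S.iseqv.trans (S.iseqv.symm (rel_nextP S i)) hij) h2)
  intro i j hij
  rcases le_total i j with h | h
  · exact key i j hij h
  · exact (orbitSetoid (nextP S)).iseqv.symm (key j i (S.iseqv.symm hij) h)

end NextP

section NonCrossing
variable {n : ℕ} {S : Setoid (Fin n)}

lemma IsNC.mem_Ioo_of_rel (hS : IsNC S) {p q u v : Fin n} (hpq : S.r p q) (hpu : p < u)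
    (huq : u < q) (hnpu : ¬ S.r p u) (huv : S.r u v) : p < v ∧ v < q := by
  rcases lt_trichotomy v p with hvp | rfl | hpv
  · have hvp' := hS v p u q hvp hpu huq (S.iseqv.symm huv) hpq
    exact absurd (S.iseqv.trans (S.iseqv.symm hvp') (S.iseqv.symm huv)) hnpu
  · exact absurd (S.iseqv.symm huv) hnpu
  rcases lt_trichotomy v q with hvq | rfl | hqv
  · exact ⟨hpv, hvq⟩
  · exact absurd (S.iseqv.trans hpq (S.iseqv.symm huv)) hnpu
  · exact absurd (hS p u q v hpu huq hqv hpq huv) hnpu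

lemma IsNC.isBlockUnion_cyclicIoo (hS : IsNC S) {a b : Fin n} (hab : S.r a b)
    (hgap : ∀ w, S.r a w → w ∉ cyclicIoo a b) : IsBlockUnion S (cyclicIoo a b) := by
  intro u hu v huv
  have hnau : ¬ S.r a u := fun h => hgap u h hu
  have hnav : ¬ S.r a v := fun h => hnau (S.iseqv.trans h (S.iseqv.symm huv))
  rcases lt_or_ge a b with hlt | hle
  · rw [cyclicIoo_of_lt hlt] at hu ⊢
    exact hS.mem_Ioo_of_rel hab hu.1 hu.2 hnau huv
  · by_contra hv
    have hva : v ≠ a := fun h => hnav (h ▸ S.iseqv.refl a)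
    have hvb : v ≠ b := fun h => hnav (h ▸ hab)
    have hbv : b < v := by rw [mem_cyclicIoo] at hv; grind
    have hva' : v < a := by rw [mem_cyclicIoo] at hv; grind
    have hu' := hS.mem_Ioo_of_rel (S.iseqv.symm hab) hbv hva'
      (fun h => hnav (S.iseqv.trans hab h)) (S.iseqv.symm huv)
    rw [mem_cyclicIoo] at hu
    grind

lemma isNC_iff_forall_isBlockUnion_cyclicIoo_nextP :
    IsNC S ↔ ∀ j, IsBlockUnion S (cyclicIoo j (nextP S j)) := by
  refine ⟨fun hS j => hS.isBlockUnion_cyclicIoo (rel_nextP S j) (nextP_spec S j).2, ?_⟩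
  intro h a b c d hab hbc hcd hac hbd
  by_contra hnab
  -- `x` is the last point of the block of `a` before `b`; its successor jumps over `b`
  obtain ⟨x, hx, hxmax⟩ := Finset.exists_max_image ((blockOf S a).filter (· < b)) id
    ⟨a, Finset.mem_filter.2 ⟨mem_blockOf.2 (S.iseqv.refl a), hab⟩⟩
  obtain ⟨hax, hxb⟩ := Finset.mem_filter.1 hx
  have hax := mem_blockOf.1 hax
  have hxc : S.r x c := S.iseqv.trans (S.iseqv.symm hax) hac
  obtain ⟨hxy, hyc⟩ := nextP_mem_Ioc_of_rel hxc (hxb.trans hbc)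
  have hay : S.r a (nextP S x) := S.iseqv.trans hax (rel_nextP S x)
  have hby : b < nextP S x := by
    rcases lt_trichotomy (nextP S x) b with hyb | hyb | hyb
    · exact absurd (hxmax _ (Finset.mem_filter.2 ⟨mem_blockOf.2 hay, hyb⟩)) (not_le.2 hxy)
    · exact absurd (hyb ▸ hay) hnab
    · exact hyb
  have hd := h x b (by rw [cyclicIoo_of_lt hxy]; exact ⟨hxb, hby⟩) d hbd
  rw [cyclicIoo_of_lt hxy] at hd
  exact absurd (hd.2.trans_le hyc) (not_lt.2 hcd.le)

end NonCrossing

lemma Function.Involutive.even_card {α : Type*} [Fintype α] {g : α → α}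
    (hg : Function.Involutive g) (hfix : ∀ x, g x ≠ x) : Even (Fintype.card α) := by
  have hσ : hg.toPerm g ^ 2 ^ 1 = 1 := by
    ext x; simp [sq, hg x]
  have hmod := Equiv.Perm.card_compl_support_modEq hσ
  have hsupp : (hg.toPerm g).supportᶜ = ∅ := by
    ext x; simp [hfix x]
  rw [hsupp, Finset.card_empty] at hmod
  exact Nat.even_iff.2 hmod.symm

namespace IsPairing
variable {m : ℕ} {T : Setoid (Fin m)}

noncomputable def partner (hT : IsPairing T) (x : Fin m) : Fin m := (hT x).choose

lemma partner_ne (hT : IsPairing T) (x : Fin m) : hT.partner x ≠ x := (hT x).choose_spec.1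

lemma rel_partner (hT : IsPairing T) (x : Fin m) : T.r x (hT.partner x) :=
  (hT x).choose_spec.2.1

lemma eq_or_eq_partner (hT : IsPairing T) {x z : Fin m} (hxz : T.r x z) :
    z = x ∨ z = hT.partner x :=
  (hT x).choose_spec.2.2 z hxz

lemma eq_partner (hT : IsPairing T) {x z : Fin m} (hxz : T.r x z) (hzx : z ≠ x) :
    z = hT.partner x :=
  (hT.eq_or_eq_partner hxz).resolve_left hzx

lemma partner_partner (hT : IsPairing T) (x : Fin m) : hT.partner (hT.partner x) = x :=
  (hT.eq_partner (T.iseqv.symm (hT.rel_partner x)) (hT.partner_ne x).symm).symm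

lemma eq_of_le {A : Setoid (Fin m)} (hA : IsPairing A) (hT : IsPairing T) (hle : A ≤ T) :
    A = T := by
  refine le_antisymm hle fun x y hxy => ?_
  by_cases hyx : y = x
  · exact hyx ▸ A.iseqv.refl x
  obtain ⟨z, hzx, hxz, -⟩ := hA x
  rwa [hT.eq_partner hxy hyx, ← hT.eq_partner (hle hxz) hzx]

lemma isBlockUnion_cyclicIoo_partner (hT : IsPairing T) (hNC : IsNC T) (x : Fin m) :
    IsBlockUnion T (cyclicIoo x (hT.partner x)) := by
  refine hNC.isBlockUnion_cyclicIoo (hT.rel_partner x) fun w hw => ?_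
  rcases hT.eq_or_eq_partner hw with rfl | rfl
  · exact left_notMem_cyclicIoo _ _
  · exact right_notMem_cyclicIoo _ _

/-- The points strictly inside an arch of a non-crossing pairing are paired among themselves,
so there is an even number of them. -/
lemma val_add_partner_mod_two (hT : IsPairing T) (hNC : IsNC T) (x : Fin m) :
    (x.val + (hT.partner x).val) % 2 = 1 := by
  wlog hlt : x < hT.partner x generalizing x
  · have h := this (hT.partner x) (by
      rw [hT.partner_partner]; exact lt_of_le_of_ne (not_lt.1 hlt) (hT.partner_ne x))
    rw [hT.partner_partner] at h
    omega
  set y := hT.partner x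
  have hmem : ∀ u, u ∈ Finset.Ioo x y ↔ u ∈ cyclicIoo x y := by
    simp [cyclicIoo_of_lt hlt]
  have hclosed := hT.isBlockUnion_cyclicIoo_partner hNC x
  let g : Finset.Ioo x y → Finset.Ioo x y := fun u =>
    ⟨hT.partner u, (hmem _).2 (hclosed u ((hmem u).1 u.2) _ (hT.rel_partner u))⟩
  have heven := Function.Involutive.even_card (g := g)
    (fun u => Subtype.ext (hT.partner_partner u))
    (fun u h => hT.partner_ne u (congrArg Subtype.val h))
  rw [Fintype.card_coe, Fin.card_Ioo] at heven
  rw [Fin.lt_def] at hlt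
  obtain ⟨k, hk⟩ := heven
  omega

end IsPairing

section Doubling
variable {n : ℕ} {S : Setoid (Fin n)}

def half (x : Fin (2*n)) : Fin n := ⟨x.val / 2, by omega⟩

@[simp] lemma half_dOdd (j : Fin n) : half (dOdd j) = j := by
  ext; simp only [half, dOdd]; omega

@[simp] lemma half_dEven (j : Fin n) : half (dEven j) = j := by
  ext; simp only [half, dEven]; omega

lemma dOdd_ne_dEven (j k : Fin n) : dOdd j ≠ dEven k := by
  simp only [ne_eq, Fin.ext_iff, dOdd, dEven]; omega

lemma dOdd_injective : Function.Injective (dOdd (n := n)) := by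
  intro j k h; simpa using congrArg half h

lemma dEven_injective : Function.Injective (dEven (n := n)) := by
  intro j k h; simpa using congrArg half h

lemma eq_dOdd_half_or_eq_dEven_half (x : Fin (2*n)) :
    x = dOdd (half x) ∨ x = dEven (half x) := by
  simp only [Fin.ext_iff, dOdd, dEven, half]; omega

lemma mem_cyclicIoo_dOdd_dEven {j k : Fin n} {x : Fin (2*n)} :
    x ∈ cyclicIoo (dOdd j) (dEven k) ↔ half x ∈ cyclicIoo j k := by
  simp only [mem_cyclicIoo, Fin.lt_def, Fin.le_def, dOdd, dEven, half]; omega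

noncomputable def nextPerm (S : Setoid (Fin n)) : Equiv.Perm (Fin n) :=
  Equiv.ofBijective (nextP S) (nextP_injective S).bijective_of_finite

/-- The index `j` of the arch `{dOdd j, dEven (nextP S j)}` of `archSetoid S` containing `x`. -/
noncomputable def archIndex (S : Setoid (Fin n)) (x : Fin (2*n)) : Fin n :=
  if x.val % 2 = 1 then half x else (nextPerm S).symm (half x)

@[simp] lemma archIndex_dOdd (j : Fin n) : archIndex S (dOdd j) = j := by
  rw [archIndex, if_pos (by simp only [dOdd]; omega), half_dOdd]

@[simp] lemma archIndex_dEven (m : Fin n) : archIndex S (dEven m) = (nextPerm S).symm m := by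
  rw [archIndex, if_neg (by simp only [dEven]; omega), half_dEven]

lemma archIndex_eq_iff {x : Fin (2*n)} {j : Fin n} :
    archIndex S x = j ↔ x = dOdd j ∨ x = dEven (nextP S j) := by
  rcases eq_dOdd_half_or_eq_dEven_half x with hx | hx <;> rw [hx]
  · simp [dOdd_injective.eq_iff, dOdd_ne_dEven]
  · simp [dEven_injective.eq_iff, (dOdd_ne_dEven _ _).symm, Equiv.symm_apply_eq, nextPerm]

lemma rel_archSetoid (S : Setoid (Fin n)) (j : Fin n) :
    (archSetoid S).r (dOdd j) (dEven (nextP S j)) :=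
  Relation.EqvGen.rel _ _ ⟨j, rfl, rfl⟩

lemma archSetoid_le_ker_archIndex (S : Setoid (Fin n)) :
    archSetoid S ≤ Setoid.ker (archIndex S) := by
  refine Setoid.eqvGen_le ?_
  rintro _ _ ⟨j, rfl, rfl⟩
  rw [Setoid.ker_def, archIndex_eq_iff.2 (Or.inl rfl), archIndex_eq_iff.2 (Or.inr rfl)]

lemma archSetoid_le_comap_half (S : Setoid (Fin n)) : archSetoid S ≤ S.comap half := by
  refine Setoid.eqvGen_le ?_
  rintro _ _ ⟨j, rfl, rfl⟩
  rw [Setoid.comap_rel, half_dOdd, half_dEven]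
  exact rel_nextP S j

lemma isPairing_archSetoid (S : Setoid (Fin n)) : IsPairing (archSetoid S) := by
  intro x
  obtain ⟨j, hj⟩ : ∃ j, archIndex S x = j := ⟨_, rfl⟩
  have hblock : ∀ z, (archSetoid S).r x z → z = dOdd j ∨ z = dEven (nextP S j) :=
    fun z hz => archIndex_eq_iff.1 ((archSetoid_le_ker_archIndex S hz).symm.trans hj)
  have hr := rel_archSetoid S j
  rcases archIndex_eq_iff.1 hj with rfl | rfl
  · exact ⟨_, (dOdd_ne_dEven _ _).symm, hr, hblock⟩
  · exact ⟨_, dOdd_ne_dEven _ _, (archSetoid S).iseqv.symm hr, fun z hz => (hblock z hz).symm⟩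

lemma isNC_archSetoid (hS : IsNC S) : IsNC (archSetoid S) := by
  intro a b c d hab hbc hcd hac hbd
  exfalso
  obtain ⟨j, hj⟩ : ∃ j, archIndex S c = j := ⟨_, rfl⟩
  -- the arch through `a` and `c` separates `b` from `d`, yet its inside is a union of blocks
  have hbd' : b ∈ cyclicIoo (dOdd j) (dEven (nextP S j)) ↔
      d ∈ cyclicIoo (dOdd j) (dEven (nextP S j)) := by
    rw [mem_cyclicIoo_dOdd_dEven, mem_cyclicIoo_dOdd_dEven]
    exact (isNC_iff_forall_isBlockUnion_cyclicIoo_nextP.1 hS j).mem_iff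
      (archSetoid_le_comap_half S hbd)
  have hcross := mem_cyclicIoo_iff_notMem_of_lt hab hbc hcd
  have hac' : a ≠ c := (hab.trans hbc).ne
  rcases archIndex_eq_iff.1 ((archSetoid_le_ker_archIndex S hac).trans hj) with rfl | rfl <;>
    rcases archIndex_eq_iff.1 hj with rfl | rfl
  · exact hac' rfl
  · exact iff_not_self (hbd'.symm.trans hcross.1)
  · exact iff_not_self (hbd'.symm.trans hcross.2)
  · exact hac' rfl

lemma archSetoid_injective : Function.Injective (archSetoid (n := n)) := by
  intro S S' h
  have hnext : nextP S = nextP S' := funext fun j => by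
    have hr := archSetoid_le_ker_archIndex S' (h ▸ rel_archSetoid S j)
    rw [Setoid.ker_def, archIndex_eq_iff.2 (Or.inl rfl), eq_comm, archIndex_eq_iff] at hr
    exact dEven_injective (hr.resolve_left (dOdd_ne_dEven _ _).symm)
  rw [← orbitSetoid_nextP S, hnext, orbitSetoid_nextP]

end Doubling

lemma exists_archSetoid_eq {n : ℕ} {T : Setoid (Fin (2*n))} (hNC : IsNC T) (hT : IsPairing T) :
    ∃ S, IsNC S ∧ archSetoid S = T := by
  set f : Fin n → Fin n := fun j => half (hT.partner (dOdd j))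
  have hf : ∀ j, hT.partner (dOdd j) = dEven (f j) := by
    intro j
    have hpar := hT.val_add_partner_mod_two hNC (dOdd j)
    rcases eq_dOdd_half_or_eq_dEven_half (hT.partner (dOdd j)) with h | h
    · rw [h] at hpar; simp only [dOdd] at hpar; omega
    · exact h
  have hrel : ∀ j, T.r (dOdd j) (dEven (f j)) := fun j => hf j ▸ hT.rel_partner _
  -- the inside of the arch from `dOdd j` to `dEven (f j)` is a union of arches
  have hclosed : ∀ j m, f m ∈ cyclicIoo j (f j) ↔ m ∈ cyclicIoo j (f j) := by
    intro j m
    have hL := hT.isBlockUnion_cyclicIoo_partner hNC (dOdd j)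
    rw [hf j] at hL
    have h1 := mem_cyclicIoo_dOdd_dEven (x := dEven (f m)) (j := j) (k := f j)
    have h2 := mem_cyclicIoo_dOdd_dEven (x := dOdd m) (j := j) (k := f j)
    rw [half_dEven] at h1
    rw [half_dOdd] at h2
    rw [← h1, ← h2]
    exact (hL.mem_iff (hrel m)).symm
  set S := orbitSetoid f
  have hS : ∀ j, IsBlockUnion S (cyclicIoo j (f j)) :=
    fun j => isBlockUnion_orbitSetoid (hclosed j)
  have hnext : nextP S = f := funext fun j => nextP_eq_iff.2
    ⟨Relation.EqvGen.rel _ _ rfl,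
      fun w hw hwC => left_notMem_cyclicIoo j (f j) (((hS j).mem_iff hw).2 hwC)⟩
  refine ⟨S, isNC_iff_forall_isBlockUnion_cyclicIoo_nextP.2 (hnext ▸ hS),
    (isPairing_archSetoid S).eq_of_le hT (Setoid.eqvGen_le ?_)⟩
  rintro _ _ ⟨j, rfl, rfl⟩
  rw [hnext]
  exact hrel j

/-- The doubling construction `π ↦ A(π)` is a bijection from the set of
non-crossing partitions of `{1,…,n}` onto the set of non-crossing pairings
of `{1,…,2n}`. -/
theorem doubling_construction_bijective (n : ℕ) :
    Set.BijOn (fun S : Setoid (Fin n) => archSetoid S)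
      {S : Setoid (Fin n) | IsNC S}
      {T : Setoid (Fin (2*n)) | IsNC T ∧ IsPairing T} :=
  ⟨fun _ hS => ⟨isNC_archSetoid hS, isPairing_archSetoid _⟩, archSetoid_injective.injOn,
    fun _ hT => exists_archSetoid_eq hT.1 hT.2⟩
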